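/- arXiv:2009.01996 — 3 statements merged into one kernel-verified Lean document; each statement's English description precedes it below -/
import Mathlib

section
/- For k ≥ 2 and n = 8k, let G_{4k} be the graph obtained from the cycle C_{8k} on vertices v₀,...,v_{8k−1} by merging v_{2i} with v_{4k+2i} for each i ∈ [0, 2k−1], and merging v_{2j+1} with v_{2k+2j+1} for each j ∈ [0, k−1] ∪ [2k, 3k−1]. Then G_{4k} is isomorphic to the circulant graph C_{4k}(1, 2k−1). -/
open Finset

namespace LocalAntimagic

variable {V : Type*} [Fintype V] [DecidableEq V]

/-- The induced vertex label: sum of labels of edges incident to `v`. -/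
def inducedSum (G : SimpleGraph V) [DecidableRel G.Adj] (f : Sym2 V → ℕ) (v : V) : ℕ :=
  ∑ e ∈ G.incidenceFinset v, f e

/-- `f` is a local antimagic labeling of `G`: a bijection from the edge set onto
`{1, …, q}` (`q` the number of edges) such that adjacent vertices get distinct
induced sums. -/
def IsLocalAntimagic (G : SimpleGraph V) [DecidableRel G.Adj] (f : Sym2 V → ℕ) : Prop :=
  Set.BijOn f G.edgeSet (Set.Icc 1 G.edgeFinset.card) ∧
  ∀ ⦃u v⦄, G.Adj u v → inducedSum G f u ≠ inducedSum G f v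

/-- The number of distinct induced vertex labels under `f`. -/
def colorCount (G : SimpleGraph V) [DecidableRel G.Adj] (f : Sym2 V → ℕ) : ℕ :=
  (Finset.image (inducedSum G f) Finset.univ).card

/-- The local antimagic chromatic number of `G` (`⊤` if no local antimagic
labeling exists). -/
noncomputable def chiLA (G : SimpleGraph V) [DecidableRel G.Adj] : ℕ∞ :=
  sInf {n : ℕ∞ | ∃ f : Sym2 V → ℕ, IsLocalAntimagic G f ∧ (colorCount G f : ℕ∞) = n}

/-- The circulant graph on `ℤ/nℤ` with connection set `S`. -/
def circulant (n : ℕ) [NeZero n] (S : Finset (ZMod n)) : SimpleGraph (ZMod n) where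
  Adj u v := u ≠ v ∧ (u - v ∈ S ∨ v - u ∈ S)
  symm := ⟨fun u v h => ⟨h.1.symm, h.2.symm⟩⟩
  loopless := ⟨fun v h => h.1 rfl⟩

instance (n : ℕ) [NeZero n] (S : Finset (ZMod n)) : DecidableRel (circulant n S).Adj :=
  fun u v => inferInstanceAs (Decidable (u ≠ v ∧ (u - v ∈ S ∨ v - u ∈ S)))

/-- The cycle `C_n` as a circulant graph on `ℤ/nℤ`. -/
def cycle (n : ℕ) [NeZero n] : SimpleGraph (ZMod n) := circulant n {1}

instance (n : ℕ) [NeZero n] : DecidableRel (cycle n).Adj :=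
  inferInstanceAs (DecidableRel (circulant n {1}).Adj)

/-- The graph obtained from `G` by merging vertices according to the
identification map `q` (adjacent iff distinct and some preimages are adjacent). -/
def mergeGraph {V' W : Type*} (G : SimpleGraph V') (q : V' → W) : SimpleGraph W where
  Adj a b := a ≠ b ∧ ∃ u v, q u = a ∧ q v = b ∧ G.Adj u v
  symm := ⟨by
    rintro a b ⟨hab, u, v, hu, hv, huv⟩
    exact ⟨hab.symm, v, u, hv, hu, huv.symm⟩⟩
  loopless := ⟨fun a h => h.1 rfl⟩

end LocalAntimagic

/-! Reduced modulo `4k`, the merged label of `v_i` is `i + 2k·ε(i)`, where `ε(i) = 1` exactly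
for the odd `i ∈ [2k, 6k)` (the odd vertices renamed by subtracting `2k` instead of `0` or `4k`).
Walking around `C_{8k}`, the image therefore moves by `1 + 2k(ε(i+1) - ε(i)) ∈ {1, 2k+1}` at each
step, and `2k + 1 = -(2k - 1)` in `ℤ/4k`. Conversely every `a ∈ ℤ/4k` is the start of a step of
each kind, so the edges of the merged graph are exactly those of `C_{4k}(1, 2k−1)`. -/

namespace LocalAntimagic

theorem circulant_pair_neg {n : ℕ} [NeZero n] (a b : ZMod n) :
    circulant n {a, -b} = circulant n {a, b} := by
  have key : ∀ x y : ZMod n, x - y = -b ↔ y - x = b := fun x y => by rw [← neg_sub, neg_inj]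
  ext u v
  simp only [circulant, Finset.mem_insert, Finset.mem_singleton, key]
  tauto

theorem mergeGraph_cycle_eq_circulant {n m : ℕ} [NeZero n] [NeZero m] (q : ZMod n → ZMod m)
    (S : Finset (ZMod m)) (hstep : ∀ x, q (x + 1) - q x ∈ S)
    (hcover : ∀ a, ∀ s ∈ S, ∃ x, q x = a ∧ q (x + 1) - q x = s) :
    mergeGraph (cycle n) q = circulant m S := by
  ext a b
  simp only [mergeGraph, cycle, circulant, Finset.mem_singleton]
  refine and_congr_right fun hab => ⟨?_, ?_⟩
  · rintro ⟨x, y, rfl, rfl, -, h | h⟩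
    · obtain rfl := sub_eq_iff_eq_add'.1 h
      exact Or.inl (hstep y)
    · obtain rfl := sub_eq_iff_eq_add'.1 h
      exact Or.inr (hstep x)
  · rintro (h | h)
    · obtain ⟨x, rfl, hx⟩ := hcover b _ h
      rw [sub_left_inj] at hx
      exact ⟨x + 1, x, hx, rfl, fun he => hab (by rw [← hx, he]),
        Or.inl (add_sub_cancel_left x 1)⟩
    · obtain ⟨x, rfl, hx⟩ := hcover a _ h
      rw [sub_left_inj] at hx
      exact ⟨x, x + 1, rfl, hx, fun he => hab (by rw [← hx, ← he]),
        Or.inr (add_sub_cancel_left x 1)⟩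

theorem apply_val_add_one {n : ℕ} [NeZero n] {α : Type*} {g : ℕ → α} (hg : g n = g 0)
    (x : ZMod n) : g (x + 1).val = g (x.val + 1) := by
  have hx : x + 1 = ((x.val + 1 : ℕ) : ZMod n) := by rw [Nat.cast_succ, ZMod.natCast_zmod_val]
  rw [hx, ZMod.val_natCast]
  rcases (show x.val + 1 ≤ n from ZMod.val_lt x).lt_or_eq with h | h
  · rw [Nat.mod_eq_of_lt h]
  · rw [h, Nat.mod_self, hg]

theorem mergeGraph_cycle_comp_val_eq_circulant {n m : ℕ} [NeZero n] [NeZero m] (g : ℕ → ZMod m)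
    (S : Finset (ZMod m)) (hg : g n = g 0) (hstep : ∀ i < n, g (i + 1) - g i ∈ S)
    (hcover : ∀ a, ∀ s ∈ S, ∃ i < n, g i = a ∧ g (i + 1) - g i = s) :
    mergeGraph (cycle n) (fun x : ZMod n => g x.val) = circulant m S := by
  refine mergeGraph_cycle_eq_circulant _ S (fun x => ?_) (fun a s hs => ?_)
  · simpa only [apply_val_add_one hg] using hstep x.val (ZMod.val_lt x)
  · obtain ⟨i, hi, rfl, hs'⟩ := hcover a s hs
    exact ⟨i, by simp [apply_val_add_one hg, ZMod.val_natCast_of_lt hi, hs']⟩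

def mergeIndex (k i : ℕ) : ℕ :=
  if Even i then i % (4 * k)
  else if i < 2 * k then i
  else if i < 6 * k then i - 2 * k
  else i - 4 * k

def mergeShift (k i : ℕ) : ℕ := if Odd i ∧ 2 * k ≤ i ∧ i < 6 * k then 2 * k else 0

theorem four_mul_natCast_eq_zero (k : ℕ) : (4 * k : ZMod (4 * k)) = 0 := by
  exact_mod_cast ZMod.natCast_self (4 * k)

theorem natCast_mergeIndex (k i : ℕ) : (mergeIndex k i : ZMod (4 * k)) = i + mergeShift k i := by
  have h4k := four_mul_natCast_eq_zero k
  rcases Nat.even_or_odd i with he | ho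
  · simp [mergeIndex, mergeShift, he, Nat.not_odd_iff_even.2 he, ZMod.natCast_mod]
  · simp only [mergeIndex, mergeShift, Nat.not_even_iff_odd.2 ho, ho, true_and, if_false]
    split_ifs <;> first
      | omega
      | (rw [Nat.cast_sub (by omega)]; push_cast; linear_combination -h4k)
      | simp

theorem natCast_mergeIndex_eight_mul (k : ℕ) :
    (mergeIndex k (8 * k) : ZMod (4 * k)) = mergeIndex k 0 := by
  rw [natCast_mergeIndex, natCast_mergeIndex, mergeShift, mergeShift, if_neg (by omega),
    if_neg (by simp)]
  push_cast
  linear_combination 2 * four_mul_natCast_eq_zero k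

theorem natCast_mergeIndex_succ_sub_mem (k i : ℕ) :
    (mergeIndex k (i + 1) : ZMod (4 * k)) - mergeIndex k i ∈
      ({1, (2 * k + 1 : ZMod (4 * k))} : Finset _) := by
  have h4k := four_mul_natCast_eq_zero k
  rw [natCast_mergeIndex, natCast_mergeIndex, Finset.mem_insert, Finset.mem_singleton,
    mergeShift, mergeShift]
  split_ifs <;> push_cast <;> first
    | (left; linear_combination)
    | (right; linear_combination)
    | (right; linear_combination -h4k)

theorem exists_mergeIndex_succ_sub_eq_one (k : ℕ) [NeZero k] (a : ZMod (4 * k)) :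
    ∃ i < 8 * k, (mergeIndex k i : ZMod (4 * k)) = a ∧
      (mergeIndex k (i + 1) : ZMod (4 * k)) - mergeIndex k i = 1 := by
  have ha := ZMod.val_lt a
  have h4k := four_mul_natCast_eq_zero k
  by_cases h : a.val < 2 * k
  · refine ⟨a.val, by omega, ?_⟩
    simp only [natCast_mergeIndex, mergeShift, Nat.odd_iff]
    split_ifs <;> first | omega | (push_cast [ZMod.natCast_zmod_val]; constructor <;> ring)
  · refine ⟨a.val + 4 * k, by omega, ?_⟩
    simp only [natCast_mergeIndex, mergeShift, Nat.odd_iff]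
    split_ifs <;> first
      | omega
      | (push_cast [ZMod.natCast_zmod_val]; exact ⟨by linear_combination h4k, by ring⟩)

theorem exists_mergeIndex_succ_sub_eq_two_mul_add_one (k : ℕ) [NeZero k] (a : ZMod (4 * k)) :
    ∃ i < 8 * k, (mergeIndex k i : ZMod (4 * k)) = a ∧
      (mergeIndex k (i + 1) : ZMod (4 * k)) - mergeIndex k i = 2 * k + 1 := by
  have ha := ZMod.val_lt a
  have h4k := four_mul_natCast_eq_zero k
  rcases Nat.even_or_odd a.val with he | ho
  · rw [Nat.even_iff] at he
    by_cases h : a.val < 2 * k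
    · refine ⟨a.val + 4 * k, by omega, ?_⟩
      simp only [natCast_mergeIndex, mergeShift, Nat.odd_iff]
      split_ifs <;> first
        | omega
        | (push_cast [ZMod.natCast_zmod_val]; exact ⟨by linear_combination h4k, by ring⟩)
    · refine ⟨a.val, by omega, ?_⟩
      simp only [natCast_mergeIndex, mergeShift, Nat.odd_iff]
      split_ifs <;> first | omega | (push_cast [ZMod.natCast_zmod_val]; constructor <;> ring)
  · rw [Nat.odd_iff] at ho
    refine ⟨a.val + 2 * k, by omega, ?_⟩
    simp only [natCast_mergeIndex, mergeShift, Nat.odd_iff]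
    split_ifs <;> first
      | omega
      | (push_cast [ZMod.natCast_zmod_val]
         exact ⟨by linear_combination h4k, by linear_combination -h4k⟩)

end LocalAntimagic

open LocalAntimagic in
theorem stmt15_general (k : ℕ) [NeZero k] :
    Nonempty
      (mergeGraph (cycle (8 * k))
        (fun x : ZMod (8 * k) =>
          ((if Even x.val then x.val % (4 * k)
            else if x.val < 2 * k then x.val
            else if x.val < 6 * k then x.val - 2 * k
            else x.val - 4 * k : ℕ) : ZMod (4 * k))) ≃g
       circulant (4 * k) {1, ((2 * k - 1 : ℕ) : ZMod (4 * k))}) := by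
  have hcover : ∀ a, ∀ s ∈ ({1, (2 * k + 1 : ZMod (4 * k))} : Finset _),
      ∃ i < 8 * k, (mergeIndex k i : ZMod (4 * k)) = a ∧
        (mergeIndex k (i + 1) : ZMod (4 * k)) - mergeIndex k i = s := by
    simp only [Finset.mem_insert, Finset.mem_singleton]
    rintro a s (rfl | rfl)
    exacts [exists_mergeIndex_succ_sub_eq_one k a,
      exists_mergeIndex_succ_sub_eq_two_mul_add_one k a]
  have hneg : (2 * k + 1 : ZMod (4 * k)) = -((2 * k - 1 : ℕ) : ZMod (4 * k)) := by
    rw [Nat.cast_sub (by have := NeZero.pos k; omega)]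
    push_cast
    linear_combination four_mul_natCast_eq_zero k
  have h := mergeGraph_cycle_comp_val_eq_circulant (n := 8 * k) _ _ (natCast_mergeIndex_eight_mul k)
    (fun i _ => natCast_mergeIndex_succ_sub_mem k i) hcover
  rw [hneg, circulant_pair_neg] at h
  exact ⟨h ▸ SimpleGraph.Iso.refl⟩

open LocalAntimagic in
/-- merging `v_{2i}` with `v_{4k+2i}` (`i ∈ [0,2k−1]`) and
`v_{2j+1}` with `v_{2k+2j+1}` (`j ∈ [0,k−1] ∪ [2k,3k−1]`) in `C_{8k}` yields a
graph isomorphic to the circulant graph `C_{4k}(1, 2k−1)`. -/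
theorem stmt15 (k : ℕ) [NeZero k] (hk : 2 ≤ k) :
    Nonempty
      (mergeGraph (cycle (8 * k))
        (fun x : ZMod (8 * k) =>
          ((if Even x.val then x.val % (4 * k)
            else if x.val < 2 * k then x.val
            else if x.val < 6 * k then x.val - 2 * k
            else x.val - 4 * k : ℕ) : ZMod (4 * k))) ≃g
       circulant (4 * k) {1, ((2 * k - 1 : ℕ) : ZMod (4 * k))}) :=
  stmt15_general k
end

section
/- For s ≥ 2 and t ≥ 0, the local antimagic chromatic number of the circulant graph C_{2^s(t+2)}(1, 2t+3, 2t+5, 4t+7, ..., 1+(2^{s−2}−1)(2t+4), 2t+3+(2^{s−2}−1)(2t+4)) equals 3. -/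
open Finset

/-! With `d = 2t + 4` and `m = 2^(s-1)`, the connection set consists, up to sign, of all residues
`≡ ±1 (mod d)`, so the circulant graph is the lexicographic product `C_d[K̄_m]`: vertex `v` lies
in class `v mod d`, and two vertices are adjacent iff their classes are consecutive.

Three labels are necessary in any regular graph with an edge: two labels would be a proper
2-colouring, and counting edges (resp. edge labels) from each colour class shows that both classes
have the same size (resp. the same label sum), hence the same label.

Three labels suffice: the `m²` edges between classes `i` and `i + 1` receive the `block i`-th
block of `m²` consecutive labels, with blocks ordered `0, d-1, 1, d-2, …` along the cycle. Inside
its block the edge from `(i, j)` to `(i + 1, k)` has offset `j + m k` if `i` is even and the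
complementary offset `m² - 1 - (k + m j)` if `i` is odd. At a vertex `(i, j)` the offsets of the
edges to `(i + 1, k)` and from `(i - 1, k)` then add up to `m² - 1` for every `k`, so its label is
`m ((block i + block (i - 1) + 1) m² + 1)`, and `block i + block (i - 1)` equals `d / 2` on class
`0`, `d - 1` on odd classes and `d` on the other even classes. -/

theorem ZMod.val_add_one_eq_ite {d : ℕ} [NeZero d] (hd : 2 ≤ d) (i : ZMod d) :
    (i + 1).val = if i.val + 1 = d then 0 else i.val + 1 := by
  rw [ZMod.val_add, ZMod.val_one'' (by omega)]
  have := i.val_lt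
  split_ifs with h
  · rw [h, Nat.mod_self]
  · exact Nat.mod_eq_of_lt (by omega)

theorem ZMod.even_val_sub_one_iff {d : ℕ} [NeZero d] (hde : Even d) (hd : 2 ≤ d) (i : ZMod d) :
    Even (i - 1).val ↔ ¬Even i.val := by
  obtain ⟨p, rfl⟩ : ∃ p, i = p + 1 := ⟨i - 1, by ring⟩
  rw [add_sub_cancel_right, ZMod.val_add_one_eq_ite hd]
  have := p.val_lt
  simp only [Nat.even_iff] at hde ⊢
  split_ifs <;> omega

theorem ZMod.two_ne_zero_of_three_le {d : ℕ} (hd : 3 ≤ d) : (2 : ZMod d) ≠ 0 := by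
  rw [← Nat.cast_ofNat, Ne, ZMod.natCast_eq_zero_iff]
  exact fun h => absurd (Nat.le_of_dvd two_pos h) (by omega)

theorem Nat.eq_and_eq_of_add_mul_eq {q a b a' b' : ℕ} (ha : a < q) (ha' : a' < q)
    (h : a + q * b = a' + q * b') : a = a' ∧ b = b' := by
  have h1 : (a + q * b) / q = b ∧ (a + q * b) % q = a :=
    (Nat.div_mod_unique (by omega)).mpr ⟨rfl, ha⟩
  have h2 : (a' + q * b') / q = b' ∧ (a' + q * b') % q = a' :=
    (Nat.div_mod_unique (by omega)).mpr ⟨rfl, ha'⟩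
  rw [h] at h1
  exact ⟨h1.2.symm.trans h2.2, h1.1.symm.trans h2.1⟩

theorem ZMod.natCast_val_eq_castHom {n d : ℕ} [NeZero n] (hdvd : d ∣ n) (x : ZMod n) :
    (x.val : ZMod d) = ZMod.castHom hdvd (ZMod d) x := by
  rw [ZMod.castHom_apply, ZMod.cast_eq_val]

theorem Fin.val_add_mul_val_lt_sq {m : ℕ} (j k : Fin m) : (j : ℕ) + m * k < m ^ 2 := by
  nlinarith [j.isLt, k.isLt]

theorem strictMono_mul_add_one_mul_sq_add_one {m : ℕ} (hm : 0 < m) :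
    StrictMono fun s : ℕ => m * ((s + 1) * m ^ 2 + 1) :=
  fun _ _ h => by dsimp only; gcongr

namespace LocalAntimagic

section Regular

variable {V : Type*} [Fintype V] [DecidableEq V] {G : SimpleGraph V} [DecidableRel G.Adj]

theorem inducedSum_eq_sum_neighborFinset (f : Sym2 V → ℕ) (v : V) :
    inducedSum G f v = ∑ w ∈ G.neighborFinset v, f s(v, w) := by
  have : G.incidenceFinset v = (G.neighborFinset v).image (s(v, ·)) := by
    ext e
    induction e with
    | _ a b =>
      simp only [SimpleGraph.mem_incidenceFinset, SimpleGraph.mk'_mem_incidenceSet_iff,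
        Finset.mem_image, SimpleGraph.mem_neighborFinset, Sym2.eq_iff]
      grind [SimpleGraph.adj_symm]
  rw [inducedSum, this, Finset.sum_image fun _ _ _ _ => Sym2.congr_right.mp]

theorem sum_inducedSum_of_forall_adj_mem_iff (f : Sym2 V → ℕ) {A : Finset V}
    (hA : ∀ ⦃a b⦄, G.Adj a b → (a ∈ A ↔ b ∉ A)) :
    ∑ v ∈ A, inducedSum G f v = ∑ e ∈ G.edgeFinset, f e := by
  have hdisj : Set.PairwiseDisjoint (A : Set V) (G.incidenceFinset ·) := by
    intro a ha b hb hab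
    refine Finset.disjoint_left.mpr fun e hea heb => ?_
    rw [SimpleGraph.mem_incidenceFinset] at hea heb
    exact (hA (G.adj_of_mem_incidenceSet hab hea heb)).mp ha hb
  have hunion : A.biUnion (G.incidenceFinset ·) = G.edgeFinset := by
    ext e
    simp only [Finset.mem_biUnion, SimpleGraph.mem_incidenceFinset, SimpleGraph.incidenceSet,
      Set.mem_ofPred_eq, SimpleGraph.mem_edgeFinset]
    refine ⟨fun ⟨_, _, he, _⟩ => he, fun he => ?_⟩
    induction e with
    | _ a b =>
      by_cases ha : a ∈ A
      · exact ⟨a, ha, he, Sym2.mem_mk_left a b⟩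
      · exact ⟨b, not_not.mp (mt (hA he).mpr ha), he, Sym2.mem_mk_right a b⟩
  rw [← hunion, Finset.sum_biUnion hdisj]
  rfl

theorem sum_inducedSum_eq_sum_compl (f : Sym2 V → ℕ) {A : Finset V}
    (hA : ∀ ⦃a b⦄, G.Adj a b → (a ∈ A ↔ b ∉ A)) :
    ∑ v ∈ A, inducedSum G f v = ∑ v ∈ Aᶜ, inducedSum G f v := by
  have hAc : ∀ ⦃a b⦄, G.Adj a b → (a ∈ Aᶜ ↔ b ∉ Aᶜ) := fun a b hab => by
    simpa only [Finset.mem_compl, not_not] using (hA hab.symm).symm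
  rw [sum_inducedSum_of_forall_adj_mem_iff f hA, sum_inducedSum_of_forall_adj_mem_iff f hAc]

theorem inducedSum_const_one (v : V) : inducedSum G (fun _ => 1) v = G.degree v := by
  simp [inducedSum, SimpleGraph.card_incidenceFinset_eq_degree]

theorem IsLocalAntimagic.three_le_colorCount [Nonempty V] {f : Sym2 V → ℕ}
    (hf : IsLocalAntimagic G f) {r : ℕ} (hG : G.IsRegularOfDegree r) (hr : 0 < r) :
    3 ≤ colorCount G f := by
  obtain ⟨u⟩ := ‹Nonempty V›
  obtain ⟨w, huw⟩ := (G.degree_pos_iff_exists_adj u).mp (hG.degree_eq u ▸ hr)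
  set x := inducedSum G f u
  set y := inducedSum G f w
  have hxy : x ≠ y := hf.2 huw
  by_contra! hlt
  have himage : univ.image (inducedSum G f) = {x, y} := by
    refine (Finset.eq_of_subset_of_card_le ?_ ?_).symm
    · simp [Finset.insert_subset_iff, x, y]
    · rw [Finset.card_pair hxy]
      exact Nat.le_of_lt_succ hlt
  have hval (v : V) : inducedSum G f v = x ∨ inducedSum G f v = y := by
    simpa [himage] using Finset.mem_image_of_mem (inducedSum G f) (Finset.mem_univ v)
  let A := univ.filter (inducedSum G f · = x)
  have hA : ∀ ⦃a b⦄, G.Adj a b → (a ∈ A ↔ b ∉ A) := by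
    intro a b hab
    have := hf.2 hab
    simp only [A, Finset.mem_filter, Finset.mem_univ, true_and]
    grind
  have hlabel : #A * x = #Aᶜ * y := by
    rw [← Finset.sum_const_nat fun v hv => (Finset.mem_filter.mp hv).2,
      ← Finset.sum_const_nat fun v hv => (hval v).resolve_left (by simpa [A] using hv)]
    exact sum_inducedSum_eq_sum_compl f hA
  have hcard : #A = #Aᶜ := by
    have hdeg (s : Finset V) : ∀ v ∈ s, inducedSum G (fun _ => 1) v = r := fun v _ => by
      rw [inducedSum_const_one, hG.degree_eq]
    refine Nat.eq_of_mul_eq_mul_right hr ?_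
    rw [← Finset.sum_const_nat (hdeg A), ← Finset.sum_const_nat (hdeg Aᶜ)]
    exact sum_inducedSum_eq_sum_compl _ hA
  have hApos : 0 < #A := Finset.card_pos.mpr ⟨u, by simp [A, x]⟩
  rw [← hcard] at hlabel
  exact hxy (Nat.eq_of_mul_eq_mul_left hApos hlabel)

theorem chiLA_eq_colorCount {f : Sym2 V → ℕ} (hf : IsLocalAntimagic G f)
    (hmin : ∀ g, IsLocalAntimagic G g → colorCount G f ≤ colorCount G g) :
    chiLA G = colorCount G f :=
  le_antisymm (sInf_le ⟨f, hf, rfl⟩) <| le_sInf <| by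
    rintro _ ⟨g, hg, rfl⟩
    exact_mod_cast hmin g hg

end Regular

section CycleBlowup

variable {V : Type*} {G : SimpleGraph V} {d m : ℕ}

/-- `e` identifies `G` with the lexicographic product `C_d[K̄_m]` (cycle classes in `ZMod d`,
indices within a class in `Fin m`). -/
def IsCycleBlowup (G : SimpleGraph V) (e : V ≃ ZMod d × Fin m) : Prop :=
  ∀ u v, G.Adj u v ↔ (e v).1 = (e u).1 + 1 ∨ (e u).1 = (e v).1 + 1

variable (d) in
def block (i : ZMod d) : ℕ := if Even i.val then i.val / 2 else d - 1 - i.val / 2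

variable (d) in
def blockSum (i : ZMod d) : ℕ := block d i + block d (i - 1)

variable (m) in
def arcLabel (i : ZMod d) (j k : Fin m) : ℕ :=
  block d i * m ^ 2 + (if Even i.val then j + m * k else m ^ 2 - 1 - (k + m * j)) + 1

def orientedLabel (e : V ≃ ZMod d × Fin m) (u w : V) : ℕ :=
  if (e w).1 = (e u).1 + 1 then arcLabel m (e u).1 (e u).2 (e w).2 else 0

/-- Only the orientation of an edge along the cycle contributes (for `3 ≤ d`); adding both
orientations makes the labeling symmetric. -/
def blowupLabel (e : V ≃ ZMod d × Fin m) : Sym2 V → ℕ :=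
  Sym2.lift ⟨fun u w => orientedLabel e u w + orientedLabel e w u, fun _ _ => add_comm _ _⟩

theorem arcLabel_add_arcLabel_sub_one [NeZero d] (hde : Even d) (hd : 2 ≤ d) (i : ZMod d)
    (j k : Fin m) :
    arcLabel m i j k + arcLabel m (i - 1) k j = (blockSum d i + 1) * m ^ 2 + 1 := by
  have := Fin.val_add_mul_val_lt_sq j k
  have := Fin.val_add_mul_val_lt_sq k j
  have := ZMod.even_val_sub_one_iff hde hd i
  unfold arcLabel blockSum
  split_ifs <;> first | tauto | (rw [add_mul, add_mul, one_mul]; omega)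

theorem blockSum_eq_ite [NeZero d] (hde : Even d) (hd : 2 ≤ d) (i : ZMod d) :
    blockSum d i = if i.val = 0 then d / 2 else if Even i.val then d else d - 1 := by
  obtain ⟨p, rfl⟩ : ∃ p, i = p + 1 := ⟨i - 1, by ring⟩
  rw [blockSum, add_sub_cancel_right]
  unfold block
  rw [ZMod.val_add_one_eq_ite hd]
  have := p.val_lt
  simp only [Nat.even_iff] at hde ⊢
  split_ifs <;> first | contradiction | omega

theorem blockSum_add_one_ne [NeZero d] (hde : Even d) (hd : 4 ≤ d) (i : ZMod d) :
    blockSum d (i + 1) ≠ blockSum d i := by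
  rw [blockSum_eq_ite hde (by omega), blockSum_eq_ite hde (by omega),
    ZMod.val_add_one_eq_ite (by omega)]
  have := i.val_lt
  simp only [Nat.even_iff] at hde ⊢
  split_ifs <;> first | contradiction | omega

theorem image_blockSum [NeZero d] (hde : Even d) (hd : 4 ≤ d) :
    univ.image (blockSum d) = {d / 2, d - 1, d} := by
  have hd2 : 2 ≤ d := by omega
  have h1 : (1 : ZMod d).val = 1 := ZMod.val_one'' (by omega)
  have h2 : (1 + 1 : ZMod d).val = 2 := by
    rw [ZMod.val_add_one_eq_ite (by omega), h1, if_neg (by omega)]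
  ext x
  simp only [Finset.mem_image, Finset.mem_univ, true_and, Finset.mem_insert,
    Finset.mem_singleton]
  constructor
  · rintro ⟨i, rfl⟩
    rw [blockSum_eq_ite hde hd2]
    split_ifs <;> simp
  · rintro (rfl | rfl | rfl)
    · exact ⟨0, by simp [blockSum_eq_ite hde hd2]⟩
    · exact ⟨1, by simp [blockSum_eq_ite hde hd2, h1]⟩
    · exact ⟨1 + 1, by simp [blockSum_eq_ite hde hd2, h2]⟩

theorem block_injective [NeZero d] : Function.Injective (block d) := by
  intro i i' h
  have := i.val_lt
  have := i'.val_lt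
  unfold block at h
  simp only [Nat.even_iff] at h
  exact ZMod.val_injective d (by split_ifs at h <;> omega)

theorem arcLabel_mem_Icc [NeZero d] (i : ZMod d) (j k : Fin m) :
    arcLabel m i j k ∈ Finset.Icc 1 (d * m ^ 2) := by
  have hblock : (block d i + 1) * m ^ 2 ≤ d * m ^ 2 := by
    refine Nat.mul_le_mul_right _ ?_
    have := i.val_lt
    unfold block
    split_ifs <;> omega
  have := Fin.val_add_mul_val_lt_sq j k
  have := Fin.val_add_mul_val_lt_sq k j
  rw [add_one_mul] at hblock
  rw [Finset.mem_Icc, arcLabel]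
  split_ifs <;> omega

theorem arcLabel_injective [NeZero d] {i i' : ZMod d} {j j' k k' : Fin m}
    (h : arcLabel m i j k = arcLabel m i' j' k') : i = i' ∧ j = j' ∧ k = k' := by
  have hoffset (i : ZMod d) (j k : Fin m) :
      (if Even i.val then j + m * k else m ^ 2 - 1 - (k + m * j)) < m ^ 2 := by
    have := Fin.val_add_mul_val_lt_sq j k
    have := Fin.val_add_mul_val_lt_sq k j
    split_ifs <;> omega
  unfold arcLabel at h
  obtain ⟨hoff, hblock⟩ :=
    Nat.eq_and_eq_of_add_mul_eq (b := block d i) (b' := block d i') (hoffset i j k)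
      (hoffset i' j' k') (by linarith)
  obtain rfl := block_injective hblock
  split_ifs at hoff
  · obtain ⟨hj, hk⟩ := Nat.eq_and_eq_of_add_mul_eq j.isLt j'.isLt hoff
    exact ⟨rfl, Fin.ext hj, Fin.ext hk⟩
  · have := Fin.val_add_mul_val_lt_sq k j
    have := Fin.val_add_mul_val_lt_sq k' j'
    obtain ⟨hk, hj⟩ :=
      Nat.eq_and_eq_of_add_mul_eq (b := j) (b' := j') k.isLt k'.isLt (by omega)
    exact ⟨rfl, Fin.ext hj, Fin.ext hk⟩

theorem blowupLabel_of_eq_add_one (hd : 3 ≤ d) {e : V ≃ ZMod d × Fin m} {u w : V}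
    (h : (e w).1 = (e u).1 + 1) :
    blowupLabel e s(u, w) = arcLabel m (e u).1 (e u).2 (e w).2 := by
  have hne : (e u).1 ≠ (e u).1 + 1 + 1 := fun h' =>
    ZMod.two_ne_zero_of_three_le hd (by linear_combination -h')
  simp [blowupLabel, orientedLabel, h, hne]

namespace IsCycleBlowup

variable {e : V ≃ ZMod d × Fin m}

theorem neighborFinset_eq [Fintype V] [DecidableRel G.Adj] (hG : IsCycleBlowup G e) (v : V) :
    G.neighborFinset v =
      (({(e v).1 + 1, (e v).1 - 1} : Finset (ZMod d)) ×ˢ univ).map e.symm.toEmbedding := by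
  ext w
  rw [SimpleGraph.mem_neighborFinset, hG, Finset.mem_map_equiv, Equiv.symm_symm,
    Finset.mem_product, Finset.mem_insert, Finset.mem_singleton, eq_sub_iff_add_eq, eq_comm]
  simp only [Finset.mem_univ, and_true]
  exact or_congr_right eq_comm

theorem isRegularOfDegree [Fintype V] [DecidableRel G.Adj] (hG : IsCycleBlowup G e)
    (hd : 3 ≤ d) : G.IsRegularOfDegree (2 * m) := fun v => by
  have hne : (e v).1 + 1 ≠ (e v).1 - 1 := fun h =>
    ZMod.two_ne_zero_of_three_le hd (by linear_combination h)
  rw [← SimpleGraph.card_neighborFinset_eq_degree, hG.neighborFinset_eq, Finset.card_map,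
    Finset.card_product, Finset.card_pair hne, Finset.card_univ, Fintype.card_fin]

theorem inducedSum_blowupLabel [Fintype V] [DecidableEq V] [DecidableRel G.Adj] [NeZero d]
    (hG : IsCycleBlowup G e) (hd : 3 ≤ d) (hde : Even d) (v : V) :
    inducedSum G (blowupLabel e) v =
      m * ((blockSum d (e v).1 + 1) * m ^ 2 + 1) := by
  have hne : (e v).1 + 1 ≠ (e v).1 - 1 := fun h =>
    ZMod.two_ne_zero_of_three_le hd (by linear_combination h)
  have hup (k : Fin m) :
      blowupLabel e s(v, e.symm ((e v).1 + 1, k)) = arcLabel m (e v).1 (e v).2 k := by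
    rw [blowupLabel_of_eq_add_one hd (by simp), Equiv.apply_symm_apply]
  have hdown (k : Fin m) :
      blowupLabel e s(v, e.symm ((e v).1 - 1, k)) = arcLabel m ((e v).1 - 1) k (e v).2 := by
    rw [Sym2.eq_swap, blowupLabel_of_eq_add_one hd (by simp), Equiv.apply_symm_apply]
  rw [inducedSum_eq_sum_neighborFinset, hG.neighborFinset_eq, Finset.sum_map, Finset.sum_product,
    Finset.sum_pair hne, ← Finset.sum_add_distrib]
  simp only [Equiv.toEmbedding_apply, hup, hdown, arcLabel_add_arcLabel_sub_one hde (by omega),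
    Finset.sum_const, Finset.card_univ, Fintype.card_fin, smul_eq_mul]

theorem inducedSum_ne_of_adj [Fintype V] [DecidableEq V] [DecidableRel G.Adj] [NeZero d]
    (hG : IsCycleBlowup G e) (hd : 4 ≤ d) (hde : Even d) {u v : V} (huv : G.Adj u v) :
    inducedSum G (blowupLabel e) u ≠ inducedSum G (blowupLabel e) v := by
  have hlabel := strictMono_mul_add_one_mul_sq_add_one (Fin.pos (e u).2)
  rw [hG.inducedSum_blowupLabel (by omega) hde, hG.inducedSum_blowupLabel (by omega) hde,
    hlabel.injective.ne_iff]
  rcases (hG u v).mp huv with h | h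
  · exact h ▸ (blockSum_add_one_ne hde hd _).symm
  · exact h ▸ blockSum_add_one_ne hde hd _

theorem colorCount_blowupLabel [Fintype V] [DecidableEq V] [DecidableRel G.Adj] [NeZero d]
    (hG : IsCycleBlowup G e) (hd : 4 ≤ d) (hde : Even d) (hm : 0 < m) :
    colorCount G (blowupLabel e) = 3 := by
  have hlabel := strictMono_mul_add_one_mul_sq_add_one hm
  have himage : univ.image (inducedSum G (blowupLabel e)) =
      (univ.image (blockSum d)).image fun s => m * ((s + 1) * m ^ 2 + 1) := by
    rw [Finset.image_image]
    ext x
    simp only [Finset.mem_image, Finset.mem_univ, true_and, Function.comp_apply,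
      hG.inducedSum_blowupLabel (by omega) hde]
    constructor
    · rintro ⟨v, rfl⟩
      exact ⟨(e v).1, rfl⟩
    · rintro ⟨i, rfl⟩
      exact ⟨e.symm (i, ⟨0, hm⟩), by simp⟩
  rw [colorCount, himage, Finset.card_image_of_injective _ hlabel.injective,
    image_blockSum hde hd]
  exact Finset.card_eq_three.mpr ⟨_, _, _, by omega, by omega, by omega, rfl⟩

theorem exists_eq_arcLabel (hG : IsCycleBlowup G e) (hd : 3 ≤ d) {ε : Sym2 V}
    (hε : ε ∈ G.edgeSet) :
    ∃ u w, ε = s(u, w) ∧ (e w).1 = (e u).1 + 1 ∧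
      blowupLabel e ε = arcLabel m (e u).1 (e u).2 (e w).2 := by
  induction ε with
  | _ u w =>
    rcases (hG u w).mp hε with h | h
    · exact ⟨u, w, rfl, h, blowupLabel_of_eq_add_one hd h⟩
    · exact ⟨w, u, Sym2.eq_swap, h, by rw [Sym2.eq_swap]; exact blowupLabel_of_eq_add_one hd h⟩

theorem card_edgeFinset [Fintype V] [DecidableRel G.Adj] [NeZero d] (hG : IsCycleBlowup G e)
    (hd : 3 ≤ d) : #G.edgeFinset = d * m ^ 2 := by
  have h := G.sum_degrees_eq_twice_card_edges
  rw [Finset.sum_congr rfl fun v _ => (hG.isRegularOfDegree hd).degree_eq v, Finset.sum_const,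
    Finset.card_univ, Fintype.card_congr e, Fintype.card_prod, ZMod.card, Fintype.card_fin,
    smul_eq_mul] at h
  linarith

theorem bijOn_blowupLabel [Fintype V] [DecidableRel G.Adj] [NeZero d] (hG : IsCycleBlowup G e)
    (hd : 3 ≤ d) :
    Set.BijOn (blowupLabel e) G.edgeSet (Set.Icc 1 #G.edgeFinset) := by
  rw [hG.card_edgeFinset hd, ← SimpleGraph.coe_edgeFinset, ← Finset.coe_Icc]
  have hmaps : Set.MapsTo (blowupLabel e) G.edgeFinset (Finset.Icc 1 (d * m ^ 2)) := by
    intro ε hε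
    obtain ⟨u, w, -, -, h⟩ := hG.exists_eq_arcLabel hd (G.mem_edgeFinset.mp hε)
    rw [Finset.mem_coe, h]
    exact arcLabel_mem_Icc _ _ _
  have hinj : Set.InjOn (blowupLabel e) G.edgeFinset := by
    intro ε hε ε' hε' h
    obtain ⟨u, w, rfl, huw, hl⟩ := hG.exists_eq_arcLabel hd (G.mem_edgeFinset.mp hε)
    obtain ⟨u', w', rfl, huw', hl'⟩ := hG.exists_eq_arcLabel hd (G.mem_edgeFinset.mp hε')
    obtain ⟨h1, h2, h3⟩ := arcLabel_injective (hl.symm.trans (h.trans hl'))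
    rw [e.injective (Prod.ext h1 h2), e.injective (Prod.ext (by rw [huw, huw', h1]) h3)]
  refine ⟨hmaps, hinj, Finset.surjOn_of_injOn_of_card_le _ hmaps hinj ?_⟩
  simp [hG.card_edgeFinset hd]

theorem chiLA_eq_three [Fintype V] [DecidableEq V] [DecidableRel G.Adj] [NeZero d]
    (hG : IsCycleBlowup G e) (hd : 4 ≤ d) (hde : Even d) (hm : 0 < m) : chiLA G = 3 := by
  have hf : IsLocalAntimagic G (blowupLabel e) :=
    ⟨hG.bijOn_blowupLabel (by omega), fun _ _ huv => hG.inducedSum_ne_of_adj hd hde huv⟩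
  have : Nonempty V := ⟨e.symm (0, ⟨0, hm⟩)⟩
  have hmin (g : Sym2 V → ℕ) (hg : IsLocalAntimagic G g) :
      colorCount G (blowupLabel e) ≤ colorCount G g := by
    rw [hG.colorCount_blowupLabel hd hde hm]
    exact hg.three_le_colorCount (hG.isRegularOfDegree (by omega)) (by omega)
  rw [chiLA_eq_colorCount hf hmin, hG.colorCount_blowupLabel hd hde hm]
  rfl

end IsCycleBlowup

end CycleBlowup

section Circulant

variable {n d m : ℕ} [NeZero n]

def classIndexEquiv [NeZero d] (hn : n = d * m) : ZMod n ≃ ZMod d × Fin m where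
  toFun v := ((v.val : ZMod d), ⟨v.val / d, Nat.div_lt_of_lt_mul (hn ▸ v.val_lt)⟩)
  invFun p := ((p.1.val + d * p.2 : ℕ) : ZMod n)
  left_inv v := by
    simp only [ZMod.val_natCast, Nat.mod_add_div, ZMod.natCast_zmod_val]
  right_inv := by
    rintro ⟨i, j⟩
    have hlt : i.val + d * j < n := by
      rw [hn]
      nlinarith [i.val_lt, j.isLt]
    ext
    · simp only [ZMod.val_cast_of_lt hlt]
      simp
    · simp only [ZMod.val_cast_of_lt hlt]
      rw [Nat.add_mul_div_left _ _ (NeZero.pos d), Nat.div_eq_of_lt i.val_lt, zero_add]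

theorem isCycleBlowup_circulant [NeZero d] (hn : n = d * m) (hd : 2 ≤ d) {S : Finset (ZMod n)}
    (hS : ∀ x : ZMod n, x ∈ S ∨ -x ∈ S ↔ (x.val : ZMod d) = 1 ∨ (x.val : ZMod d) = -1) :
    IsCycleBlowup (circulant n S) (classIndexEquiv hn) := by
  have : Fact (1 < d) := ⟨hd⟩
  have hdvd : d ∣ n := hn ▸ dvd_mul_right d m
  intro u v
  change u ≠ v ∧ (u - v ∈ S ∨ v - u ∈ S) ↔
    (v.val : ZMod d) = u.val + 1 ∨ (u.val : ZMod d) = v.val + 1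
  simp only [ZMod.natCast_val_eq_castHom hdvd] at hS ⊢
  rw [← neg_sub v u, or_comm, hS, map_sub]
  constructor
  · rintro ⟨-, h | h⟩
    · exact Or.inl (by linear_combination h)
    · exact Or.inr (by linear_combination -h)
  · intro h
    refine ⟨?_, h.imp (fun h => by linear_combination h) (fun h => by linear_combination -h)⟩
    rintro rfl
    exact one_ne_zero (by rcases h with h | h <;> linear_combination -h)

theorem chiLA_circulant_eq_three [NeZero d] (hn : n = d * m) (hd : 4 ≤ d) (hde : Even d)
    (hm : 0 < m) {S : Finset (ZMod n)}
    (hS : ∀ x : ZMod n, x ∈ S ∨ -x ∈ S ↔ (x.val : ZMod d) = 1 ∨ (x.val : ZMod d) = -1) :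
    chiLA (circulant n S) = 3 :=
  (isCycleBlowup_circulant hn (by omega) hS).chiLA_eq_three hd hde hm

def connectionSet (n d c h : ℕ) : Finset (ZMod n) :=
  image (fun r => ((1 + r * d : ℕ) : ZMod n)) (range h) ∪
    image (fun r => ((c + r * d : ℕ) : ZMod n)) (range h)

variable {c h : ℕ}

theorem natCast_val_eq_one_or_neg_one_of_mem_connectionSet (hn : n = d * (2 * h))
    (hc : c + 1 = d) {y : ZMod n} (hy : y ∈ connectionSet n d c h) :
    (y.val : ZMod d) = 1 ∨ (y.val : ZMod d) = -1 := by
  rw [ZMod.natCast_val_eq_castHom (hn ▸ dvd_mul_right d (2 * h))]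
  simp only [connectionSet, Finset.mem_union, Finset.mem_image] at hy
  rcases hy with ⟨r, -, rfl⟩ | ⟨r, -, rfl⟩
  · left
    rw [map_natCast]
    simp
  · right
    rw [map_natCast, eq_neg_iff_add_eq_zero, ← Nat.cast_one, ← Nat.cast_add,
      ZMod.natCast_eq_zero_iff]
    exact ⟨r + 1, by rw [← hc]; ring⟩

/-- If `y = 1 + q d` with `h ≤ q < 2 h`, then `-y = c + (2 h - 1 - q) d` since `c + 1 = d`. -/
theorem mem_or_neg_mem_connectionSet_of_natCast_val_eq_one (hn : n = d * (2 * h)) (hd : 2 ≤ d)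
    (hc : c + 1 = d) {y : ZMod n} (hy : (y.val : ZMod d) = 1) :
    y ∈ connectionSet n d c h ∨ -y ∈ connectionSet n d c h := by
  have hmod : y.val % d = 1 := by
    have := congrArg ZMod.val hy
    rwa [ZMod.val_natCast, ZMod.val_one'' (by omega)] at this
  obtain ⟨q, hyq⟩ : ∃ q, y.val = 1 + q * d :=
    ⟨y.val / d, by rw [← hmod, mul_comm]; exact (Nat.mod_add_div _ _).symm⟩
  have hq : q < 2 * h := by
    by_contra!
    nlinarith [y.val_lt]
  by_cases hqh : q < h
  · refine Or.inl (Finset.mem_union_left _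
      (Finset.mem_image.mpr ⟨q, Finset.mem_range.mpr hqh, ?_⟩))
    rw [← hyq, ZMod.natCast_zmod_val]
  · refine Or.inr (Finset.mem_union_right _
      (Finset.mem_image.mpr ⟨2 * h - 1 - q, Finset.mem_range.mpr (by omega), ?_⟩))
    rw [eq_neg_iff_add_eq_zero, ← ZMod.natCast_zmod_val y, hyq, ← Nat.cast_add,
      ZMod.natCast_eq_zero_iff]
    obtain ⟨k, hk, hkq⟩ : ∃ k, 2 * h - 1 - q = k ∧ k + q + 1 = 2 * h :=
      ⟨_, rfl, by omega⟩
    exact ⟨1, by rw [hk, hn, ← hkq, ← hc]; ring⟩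

theorem mem_or_neg_mem_connectionSet_iff (hn : n = d * (2 * h)) (hd : 2 ≤ d) (hc : c + 1 = d)
    (x : ZMod n) :
    x ∈ connectionSet n d c h ∨ -x ∈ connectionSet n d c h ↔
      (x.val : ZMod d) = 1 ∨ (x.val : ZMod d) = -1 := by
  have hneg (y : ZMod n) : ((-y).val : ZMod d) = -(y.val : ZMod d) := by
    simp only [ZMod.natCast_val_eq_castHom (hn ▸ dvd_mul_right d (2 * h)), map_neg]
  constructor
  · rintro (hx | hx)
    · exact natCast_val_eq_one_or_neg_one_of_mem_connectionSet hn hc hx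
    · have := natCast_val_eq_one_or_neg_one_of_mem_connectionSet hn hc hx
      rwa [hneg, neg_eq_iff_eq_neg, neg_eq_iff_eq_neg, neg_neg, or_comm] at this
  · rintro (hx | hx)
    · exact mem_or_neg_mem_connectionSet_of_natCast_val_eq_one hn hd hc hx
    · have := mem_or_neg_mem_connectionSet_of_natCast_val_eq_one (y := -x) hn hd hc
        (by rw [hneg, hx, neg_neg])
      rwa [neg_neg, or_comm] at this

end Circulant

end LocalAntimagic

open LocalAntimagic in
/-- for `s ≥ 2`, `t ≥ 0`,
`χ_la(C_{2^s(t+2)}(1, 2t+3, …, 1+(2^{s−2}−1)(2t+4), 2t+3+(2^{s−2}−1)(2t+4))) = 3`. -/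
theorem stmt17 (s t : ℕ) (hs : 2 ≤ s) :
    chiLA (circulant (2 ^ s * (t + 2))
      (Finset.image (fun r => ((1 + r * (2 * t + 4) : ℕ) : ZMod (2 ^ s * (t + 2))))
          (Finset.range (2 ^ (s - 2))) ∪
       Finset.image (fun r => ((2 * t + 3 + r * (2 * t + 4) : ℕ) : ZMod (2 ^ s * (t + 2))))
          (Finset.range (2 ^ (s - 2))))) = 3 := by
  obtain ⟨k, rfl⟩ : ∃ k, s = k + 2 := ⟨s - 2, by omega⟩
  have : NeZero (2 * t + 4) := ⟨by omega⟩
  have hn : 2 ^ (k + 2) * (t + 2) = (2 * t + 4) * (2 * 2 ^ k) := by ring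
  rw [Nat.add_sub_cancel]
  exact chiLA_circulant_eq_three hn (by omega) ⟨t + 2, by ring⟩ (by positivity)
    (mem_or_neg_mem_connectionSet_iff hn (by omega) (by omega))
end

section
/- A graph G of size q has χ_la(G) = 2 if and only if G is bipartite with bipartition (V₁, V₂) such that (i) G has at most one pendant vertex, and (ii) G admits a local antimagic labeling in which every vertex of V₁ has induced label (q(q+1)/2)/|V₁| and every vertex of V₂ has induced label (q(q+1)/2)/|V₂|, and these two quantities are distinct integers. -/
open Finset

/-!
If a local antimagic labeling `f` induces exactly two labels `c₁ ≠ c₂`, their level sets `V₁, V₂`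
form a bipartition, and since every edge has exactly one end in each part,
`|Vᵢ| · cᵢ = 1 + ⋯ + q = q(q+1)/2`. Two pendant vertices cannot have the same induced label: it is
the label of their unique edge, which would then join them. So they lie in different parts and
`c₁, c₂ ≤ q`, whence `|Vᵢ| ≥ (q+1)/2` for both parts. A connected graph has at most `q + 1`
vertices, which forces `|V₁| = |V₂|` and then `c₁ = c₂`, a contradiction. Conversely, a labeling
that is constant on both parts of a bipartition has at most two labels, and any edge forces two.
-/

theorem Finset.sum_mul_two_of_bijOn_Icc {α : Type*} {s : Finset α} {f : α → ℕ}
    (hf : Set.BijOn f s (Set.Icc 1 #s)) : (∑ a ∈ s, f a) * 2 = #s * (#s + 1) := by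
  have hgauss := Finset.sum_range_id_mul_two (#s + 1)
  rw [Finset.range_eq_Ico, Finset.sum_eq_sum_Ico_succ_bot (#s).succ_pos] at hgauss
  rw [← Finset.coe_Icc] at hf
  have hsum : ∑ a ∈ s, f a = ∑ i ∈ Icc 1 #s, i :=
    Finset.sum_nbij f (fun _ ha => hf.mapsTo ha) hf.injOn hf.surjOn (fun _ _ => rfl)
  rw [hsum]
  simpa [mul_comm, Finset.Ico_add_one_right_eq_Icc] using hgauss

theorem SimpleGraph.IsBipartiteWith.card_filter_mem_eq_one {V : Type*} [DecidableEq V]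
    {G : SimpleGraph V} {s t : Finset V} (h : G.IsBipartiteWith s t) {e : Sym2 V}
    (he : e ∈ G.edgeSet) : #{v ∈ s | v ∈ e} = 1 := by
  induction e using Sym2.ind with
  | _ a b =>
    rw [Finset.card_eq_one]
    rcases h.mem_of_adj he with ⟨ha, hb⟩ | ⟨ha, hb⟩
    · refine ⟨a, Finset.ext fun v => ?_⟩
      have := Set.disjoint_right.mp h.disjoint hb
      simp only [Finset.mem_filter, Sym2.mem_iff, Finset.mem_singleton]
      grind
    · refine ⟨b, Finset.ext fun v => ?_⟩
      have := Set.disjoint_right.mp h.disjoint ha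
      simp only [Finset.mem_filter, Sym2.mem_iff, Finset.mem_singleton]
      grind

namespace LocalAntimagic

variable {V : Type*} [Fintype V] [DecidableEq V] {G : SimpleGraph V} [DecidableRel G.Adj]

lemma exists_inducedSum_eq_of_degree_eq_one {v : V} (hv : G.degree v = 1) (f : Sym2 V → ℕ) :
    ∃ e ∈ G.edgeSet, v ∈ e ∧ inducedSum G f v = f e := by
  rw [← G.card_incidenceFinset_eq_degree, Finset.card_eq_one] at hv
  obtain ⟨e, he⟩ := hv
  have hinc : e ∈ G.incidenceSet v := by
    rw [← G.mem_incidenceFinset, he]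
    exact Finset.mem_singleton_self e
  exact ⟨e, hinc.1, hinc.2, by rw [inducedSum, he, Finset.sum_singleton]⟩

variable {f : Sym2 V → ℕ} {s t : Finset V} {c c₁ c₂ : ℕ}

lemma sum_inducedSum_eq_of_isBipartiteWith (h : G.IsBipartiteWith s t) :
    ∑ v ∈ s, inducedSum G f v = ∑ e ∈ G.edgeFinset, f e := by
  simp only [inducedSum, SimpleGraph.incidenceFinset_eq_filter, Finset.sum_filter]
  rw [Finset.sum_comm]
  refine Finset.sum_congr rfl fun e he => ?_
  rw [← Finset.sum_filter, Finset.sum_const, smul_eq_mul,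
    h.card_filter_mem_eq_one (G.mem_edgeFinset.mp he), one_mul]

lemma card_mul_mul_two_eq_of_forall_inducedSum_eq (h : G.IsBipartiteWith s t)
    (hf : Set.BijOn f G.edgeSet (Set.Icc 1 #G.edgeFinset))
    (hc : ∀ v ∈ s, inducedSum G f v = c) :
    #s * c * 2 = #G.edgeFinset * (#G.edgeFinset + 1) := by
  rw [← Finset.sum_const_nat hc, sum_inducedSum_eq_of_isBipartiteWith h]
  exact Finset.sum_mul_two_of_bijOn_Icc (G.coe_edgeFinset ▸ hf)

lemma card_mul_eq_of_forall_inducedSum_eq (h : G.IsBipartiteWith s t)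
    (hf : Set.BijOn f G.edgeSet (Set.Icc 1 #G.edgeFinset))
    (hc : ∀ v ∈ s, inducedSum G f v = c) :
    #s * c = #G.edgeFinset * (#G.edgeFinset + 1) / 2 := by
  have := card_mul_mul_two_eq_of_forall_inducedSum_eq h hf hc
  omega

lemma div_card_eq_of_forall_inducedSum_eq (h : G.IsBipartiteWith s t)
    (hf : Set.BijOn f G.edgeSet (Set.Icc 1 #G.edgeFinset))
    (hc : ∀ v ∈ s, inducedSum G f v = c) (hs : s.Nonempty) :
    #G.edgeFinset * (#G.edgeFinset + 1) / 2 / #s = c := by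
  rw [← card_mul_eq_of_forall_inducedSum_eq h hf hc, Nat.mul_div_cancel_left _ hs.card_pos]

lemma eq_of_forall_inducedSum_eq_of_mem_Icc (hconn : G.Connected) (h : G.IsBipartiteWith s t)
    (hst : s ∪ t = univ) (hf : Set.BijOn f G.edgeSet (Set.Icc 1 #G.edgeFinset))
    (hs : ∀ v ∈ s, inducedSum G f v = c₁) (ht : ∀ v ∈ t, inducedSum G f v = c₂)
    (hc₁ : c₁ ∈ Set.Icc 1 #G.edgeFinset) (hc₂ : c₂ ∈ Set.Icc 1 #G.edgeFinset) : c₁ = c₂ := by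
  set q := #G.edgeFinset
  have e₁ := card_mul_mul_two_eq_of_forall_inducedSum_eq h hf hs
  have e₂ := card_mul_mul_two_eq_of_forall_inducedSum_eq h.symm hf ht
  have hV : #s + #t ≤ q + 1 := by
    rw [← Finset.card_union_of_disjoint (Finset.disjoint_coe.mp h.disjoint), hst,
      Finset.card_univ]
    have := hconn.card_vert_le_card_edgeSet_add_one
    rwa [Nat.card_eq_fintype_card, Nat.card_eq_fintype_card, G.card_edgeSet] at this
  have h₁ : q + 1 ≤ 2 * #s := by nlinarith [hc₁.1, hc₁.2]
  have h₂ : q + 1 ≤ 2 * #t := by nlinarith [hc₂.1, hc₂.2]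
  have hcard : #s = #t := by omega
  rw [← hcard] at e₂
  exact Nat.eq_of_mul_eq_mul_left (n := #s) (by omega) (by omega)

lemma IsLocalAntimagic.inducedSum_ne_of_degree_eq_one (hf : IsLocalAntimagic G f) {u w : V}
    (hu : G.degree u = 1) (hw : G.degree w = 1) (huw : u ≠ w) :
    inducedSum G f u ≠ inducedSum G f w := by
  intro hsum
  obtain ⟨e, he, hue, hsu⟩ := exists_inducedSum_eq_of_degree_eq_one hu f
  obtain ⟨e', he', hwe', hsw⟩ := exists_inducedSum_eq_of_degree_eq_one hw f
  obtain rfl : e = e' := hf.1.injOn he he' (hsu ▸ hsw ▸ hsum)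
  obtain rfl : e = s(u, w) := (Sym2.mem_and_mem_iff huw).mp ⟨hue, hwe'⟩
  exact hf.2 he hsum

lemma card_degree_eq_one_le_one (hconn : G.Connected) (hf : IsLocalAntimagic G f)
    (h : G.IsBipartiteWith s t) (hst : s ∪ t = univ)
    (hs : ∀ v ∈ s, inducedSum G f v = c₁) (ht : ∀ v ∈ t, inducedSum G f v = c₂)
    (hc : c₁ ≠ c₂) : #{v | G.degree v = 1} ≤ 1 := by
  refine Finset.card_le_one.mpr fun u hu w hw => by_contra fun huw => ?_
  simp only [Finset.mem_filter, Finset.mem_univ, true_and] at hu hw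
  have hne := hf.inducedSum_ne_of_degree_eq_one hu hw huw
  have hmem : ∀ v, G.degree v = 1 → inducedSum G f v ∈ Set.Icc 1 #G.edgeFinset := fun v hv => by
    obtain ⟨e, he, -, hsum⟩ := exists_inducedSum_eq_of_degree_eq_one hv f
    exact hsum ▸ hf.1.mapsTo he
  have hpart : ∀ v, v ∈ s ∨ v ∈ t := fun v => Finset.mem_union.mp (hst ▸ Finset.mem_univ v)
  have heq := eq_of_forall_inducedSum_eq_of_mem_Icc hconn h hst hf.1 hs ht
  rcases hpart u with hu' | hu' <;> rcases hpart w with hw' | hw'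
  · exact hne (by rw [hs u hu', hs w hw'])
  · exact hc (heq (hs u hu' ▸ hmem u hu) (ht w hw' ▸ hmem w hw))
  · exact hc (heq (hs w hw' ▸ hmem w hw) (ht u hu' ▸ hmem u hu))
  · exact hne (by rw [ht u hu', ht w hw'])

lemma IsLocalAntimagic.exists_isBipartiteWith_of_colorCount_eq_two (hf : IsLocalAntimagic G f)
    (h2 : colorCount G f = 2) :
    ∃ (s t : Finset V) (c₁ c₂ : ℕ), c₁ ≠ c₂ ∧ G.IsBipartiteWith s t ∧ s ∪ t = univ ∧
      s.Nonempty ∧ t.Nonempty ∧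
      (∀ v ∈ s, inducedSum G f v = c₁) ∧ ∀ v ∈ t, inducedSum G f v = c₂ := by
  obtain ⟨c₁, c₂, hc, himg⟩ := Finset.card_eq_two.mp h2
  have hval (v : V) : inducedSum G f v = c₁ ∨ inducedSum G f v = c₂ := by
    simpa [himg] using Finset.mem_image_of_mem (inducedSum G f) (Finset.mem_univ v)
  have hex (c : ℕ) (hmem : c ∈ ({c₁, c₂} : Finset ℕ)) : ∃ v, inducedSum G f v = c := by
    rw [← himg] at hmem
    simpa using hmem
  refine ⟨({v | inducedSum G f v = c₁} : Finset V), ({v | inducedSum G f v = c₂} : Finset V),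
    c₁, c₂, hc, ⟨?_, ?_⟩, ?_, ?_, ?_, by simp, by simp⟩
  · exact Finset.disjoint_coe.mpr (Finset.disjoint_filter.mpr fun v _ h₁ h₂ => hc (h₁ ▸ h₂))
  · intro u w huw
    have := hf.2 huw
    simp only [Finset.coe_filter, Finset.mem_univ, true_and, Set.mem_ofPred_eq]
    grind
  · ext v
    simp [hval v]
  · obtain ⟨v, hv⟩ := hex c₁ (by simp)
    exact ⟨v, by simpa using hv⟩
  · obtain ⟨v, hv⟩ := hex c₂ (by simp)
    exact ⟨v, by simpa using hv⟩

lemma colorCount_le_two (hst : s ∪ t = univ) (hs : ∀ v ∈ s, inducedSum G f v = c₁)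
    (ht : ∀ v ∈ t, inducedSum G f v = c₂) : colorCount G f ≤ 2 := by
  unfold colorCount
  refine (Finset.card_le_card (t := {c₁, c₂}) fun c hc => ?_).trans Finset.card_le_two
  obtain ⟨v, -, rfl⟩ := Finset.mem_image.mp hc
  rcases Finset.mem_union.mp (hst ▸ Finset.mem_univ v) with hv | hv
  · simp [hs v hv]
  · simp [ht v hv]

lemma IsLocalAntimagic.two_le_colorCount (hf : IsLocalAntimagic G f) {u v : V}
    (huv : G.Adj u v) : 2 ≤ colorCount G f :=
  Finset.one_lt_card.mpr ⟨_, Finset.mem_image_of_mem _ (Finset.mem_univ u),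
    _, Finset.mem_image_of_mem _ (Finset.mem_univ v), hf.2 huv⟩

lemma chiLA_le_colorCount (hf : IsLocalAntimagic G f) : chiLA G ≤ colorCount G f :=
  sInf_le ⟨f, hf, rfl⟩

lemma two_le_chiLA (hG : G ≠ ⊥) : 2 ≤ chiLA G := by
  obtain ⟨u, v, huv⟩ := SimpleGraph.ne_bot_iff_exists_adj.mp hG
  refine le_sInf ?_
  rintro n ⟨f, hf, rfl⟩
  exact_mod_cast hf.two_le_colorCount huv

lemma exists_isLocalAntimagic_colorCount_eq_chiLA (h : chiLA G ≠ ⊤) :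
    ∃ f, IsLocalAntimagic G f ∧ (colorCount G f : ℕ∞) = chiLA G := by
  have hne : {n : ℕ∞ | ∃ f, IsLocalAntimagic G f ∧ (colorCount G f : ℕ∞) = n}.Nonempty := by
    refine Set.nonempty_iff_ne_empty.mpr fun hempty => h ?_
    rw [chiLA, hempty, sInf_empty]
  exact csInf_mem hne

end LocalAntimagic

open LocalAntimagic in
/-- `χ_la(G) = 2` iff `G` is bipartite with at most one pendant
and admits a local antimagic labeling whose induced labels are the two distinct
integers `(q(q+1)/2)/|V₁|` and `(q(q+1)/2)/|V₂|` on the respective parts. -/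
theorem stmt19 {V : Type*} [Fintype V] [DecidableEq V] (G : SimpleGraph V)
    [DecidableRel G.Adj] (hconn : G.Connected) :
    chiLA G = 2 ↔
      ∃ V1 V2 : Finset V, Disjoint V1 V2 ∧ V1 ∪ V2 = Finset.univ ∧
        (∀ u v, G.Adj u v → (u ∈ V1 ∧ v ∈ V2) ∨ (u ∈ V2 ∧ v ∈ V1)) ∧
        (Finset.univ.filter fun v => G.degree v = 1).card ≤ 1 ∧
        ∃ f : Sym2 V → ℕ, IsLocalAntimagic G f ∧
          (∀ v ∈ V1, inducedSum G f v =
            G.edgeFinset.card * (G.edgeFinset.card + 1) / 2 / V1.card) ∧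
          (∀ v ∈ V2, inducedSum G f v =
            G.edgeFinset.card * (G.edgeFinset.card + 1) / 2 / V2.card) ∧
          V1.card ∣ G.edgeFinset.card * (G.edgeFinset.card + 1) / 2 ∧
          V2.card ∣ G.edgeFinset.card * (G.edgeFinset.card + 1) / 2 ∧
          G.edgeFinset.card * (G.edgeFinset.card + 1) / 2 / V1.card ≠
            G.edgeFinset.card * (G.edgeFinset.card + 1) / 2 / V2.card := by
  constructor
  · intro h
    obtain ⟨f, hf, hcount⟩ := exists_isLocalAntimagic_colorCount_eq_chiLA (G := G) (by simp [h])
    obtain ⟨s, t, c₁, c₂, hc, hbip, hunion, hs_ne, ht_ne, hs, ht⟩ :=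
      hf.exists_isBipartiteWith_of_colorCount_eq_two (by exact_mod_cast hcount.trans h)
    have e₁ := div_card_eq_of_forall_inducedSum_eq hbip hf.1 hs hs_ne
    have e₂ := div_card_eq_of_forall_inducedSum_eq hbip.symm hf.1 ht ht_ne
    refine ⟨s, t, Finset.disjoint_coe.mp hbip.disjoint, hunion, hbip.mem_of_adj,
      card_degree_eq_one_le_one hconn hf hbip hunion hs ht hc, f, hf, e₁ ▸ hs, e₂ ▸ ht,
      Dvd.intro c₁ (card_mul_eq_of_forall_inducedSum_eq hbip hf.1 hs),
      Dvd.intro c₂ (card_mul_eq_of_forall_inducedSum_eq hbip.symm hf.1 ht), e₁ ▸ e₂ ▸ hc⟩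
  · rintro ⟨V1, V2, -, hunion, -, -, f, hf, h₁, h₂, -, -, hne⟩
    have hG : G ≠ ⊥ := by
      rw [← SimpleGraph.edgeFinset_nonempty, ← Finset.card_pos, Nat.pos_iff_ne_zero]
      rintro hq
      simp [hq] at hne
    exact le_antisymm
      ((chiLA_le_colorCount hf).trans (by exact_mod_cast colorCount_le_two hunion h₁ h₂))
      (two_le_chiLA hG)
end
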